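/- arXiv:1106.1606 — 7 statements merged into one kernel-verified Lean document; each statement's English description precedes it below -/
import Mathlib

section
/- Every semi-stable cokernel is the cokernel of its kernel. -/
open CategoryTheory CategoryTheory.Limits ZeroObject

universe v u

variable {𝒞 : Type u} [Category.{v} 𝒞] [Preadditive 𝒞] [HasZeroObject 𝒞] [HasBinaryBiproducts 𝒞]

/-- `d` is a cokernel of some morphism. -/
def IsCokernelOfSome {B X : 𝒞} (d : B ⟶ X) : Prop :=
  ∃ (A : 𝒞) (f : A ⟶ B) (w : f ≫ d = 0), Nonempty (IsColimit (CokernelCofork.ofπ d w))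

/-- `i` is a kernel of some morphism. -/
def IsKernelOfSome {A B : 𝒞} (i : A ⟶ B) : Prop :=
  ∃ (X : 𝒞) (f : B ⟶ X) (w : i ≫ f = 0), Nonempty (IsLimit (KernelFork.ofι i w))

/-- A semi-stable cokernel: a cokernel whose pullback along every morphism exists
and is again a cokernel. -/
def IsSemiStableCokernel {B X : 𝒞} (d : B ⟶ X) : Prop :=
  IsCokernelOfSome d ∧ ∀ (C' : 𝒞) (h : C' ⟶ X), ∃ (B' : 𝒞) (g : B' ⟶ B) (d' : B' ⟶ C'),
    IsPullback g d' d h ∧ IsCokernelOfSome d'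

/-- A semi-stable kernel: a kernel whose pushout along every morphism exists
and is again a kernel. -/
def IsSemiStableKernel {A B : 𝒞} (i : A ⟶ B) : Prop :=
  IsKernelOfSome i ∧ ∀ (A' : 𝒞) (h : A ⟶ A'), ∃ (P : 𝒞) (g : B ⟶ P) (i' : A' ⟶ P),
    IsPushout i h g i' ∧ IsKernelOfSome i'

theorem stmt3 {A B X : 𝒞} (d : B ⟶ X) (hd : IsSemiStableCokernel d)
    (i : A ⟶ B) (w : i ≫ d = 0) (hker : IsLimit (KernelFork.ofι i w)) :
    Nonempty (IsColimit (CokernelCofork.ofπ d w)) := by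
  obtain ⟨A', f, wf, ⟨hc⟩⟩ := hd.1
  have hf : hker.lift (KernelFork.ofι f wf) ≫ i = f := hker.fac _ WalkingParallelPair.zero
  refine ⟨CokernelCofork.IsColimit.ofπ _ _
    (fun g hg => hc.desc (CokernelCofork.ofπ g (by rw [← hf, Category.assoc, hg, Limits.comp_zero])))
    (fun g hg => hc.fac _ WalkingParallelPair.one) ?_⟩
  intro Y g hg m hm
  apply Cofork.IsColimit.hom_ext hc
  have := hc.fac (CokernelCofork.ofπ g (show f ≫ g = 0 by
    rw [← hf, Category.assoc, hg, Limits.comp_zero])) WalkingParallelPair.one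
  simp only [Cofork.app_one_eq_π, Cofork.π_ofπ] at this ⊢
  rw [hm, this]
end

section
/- The pullback of a semi-stable cokernel along an arbitrary morphism exists and is again a semi-stable cokernel. -/
open CategoryTheory CategoryTheory.Limits ZeroObject

universe v u

variable {𝒞 : Type u} [Category.{v} 𝒞] [Preadditive 𝒞] [HasZeroObject 𝒞] [HasBinaryBiproducts 𝒞]

/-! Pullbacks are unique up to isomorphism and being a cokernel is invariant under composing
with an isomorphism, so *every* pullback of a semi-stable cokernel is a cokernel. By the pasting
lemma, a pullback of `d'` along `h'` is a pullback of `d` along `h' ≫ h`. -/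

omit [HasZeroObject 𝒞] [HasBinaryBiproducts 𝒞] in
lemma IsCokernelOfSome.iso_hom_comp {B₁ B₂ C : 𝒞} (e : B₁ ≅ B₂) {d : B₂ ⟶ C}
    (hd : IsCokernelOfSome d) : IsCokernelOfSome (e.hom ≫ d) := by
  obtain ⟨A, f, w, ⟨hf⟩⟩ := hd
  exact ⟨A, f ≫ e.inv, by simp [w], ⟨IsCokernel.ofIso f hf _ (Iso.refl A) e.symm (Iso.refl C)
    (by simp) (by simp)⟩⟩

omit [HasZeroObject 𝒞] [HasBinaryBiproducts 𝒞] in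
lemma IsSemiStableCokernel.isCokernelOfSome_of_isPullback {B X C' B' : 𝒞} {d : B ⟶ X}
    (hd : IsSemiStableCokernel d) {h : C' ⟶ X} {g : B' ⟶ B} {d' : B' ⟶ C'}
    (hPB : IsPullback g d' d h) : IsCokernelOfSome d' := by
  obtain ⟨B₂, g₂, d₂, hPB₂, hd₂⟩ := hd.2 C' h
  simpa using hd₂.iso_hom_comp (hPB.isoIsPullback _ _ hPB₂)

theorem stmt4 {B X C' B' : 𝒞} (d : B ⟶ X) (hd : IsSemiStableCokernel d)
    (h : C' ⟶ X) (g : B' ⟶ B) (d' : B' ⟶ C') (hPB : IsPullback g d' d h) :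
    IsSemiStableCokernel d' := by
  refine ⟨hd.isCokernelOfSome_of_isPullback hPB, fun C'' h' => ?_⟩
  obtain ⟨B₂, g₂, d₂, hPB₂, hd₂⟩ := hd.2 C'' (h' ≫ h)
  exact ⟨B₂, _, d₂, hPB₂.of_right' hPB, hd₂⟩
end

section
/- The composition of two semi-stable cokernels is a semi-stable cokernel. -/
open CategoryTheory CategoryTheory.Limits ZeroObject

universe v u

variable {𝒞 : Type u} [Category.{v} 𝒞] [Preadditive 𝒞] [HasZeroObject 𝒞] [HasBinaryBiproducts 𝒞]

/-- A cokernel-of-some is an epimorphism. -/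
lemma IsCokernelOfSome.epi {B X : 𝒞} {d : B ⟶ X} (h : IsCokernelOfSome d) : Epi d := by
  obtain ⟨A, f, w, ⟨hc⟩⟩ := h
  exact epi_of_isColimit_cofork hc

/-- Composition of a semi-stable cokernel with a cokernel-of-some is a cokernel-of-some. -/
lemma comp_isCokernelOfSome {B X D : 𝒞} (d : B ⟶ X) (p : X ⟶ D)
    (hd : IsSemiStableCokernel d) (hp : IsCokernelOfSome p) :
    IsCokernelOfSome (d ≫ p) := by
  obtain ⟨⟨A, f, wf, ⟨hf⟩⟩, hpb⟩ := hd
  obtain ⟨Y, g, wg, ⟨hg⟩⟩ := hp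
  obtain ⟨Y', q, d'', sq, hq⟩ := hpb Y g
  have hd'epi : Epi d'' := hq.epi
  have hdepi : Epi d := epi_of_isColimit_cofork hf
  have hpepi : Epi p := epi_of_isColimit_cofork hg
  refine ⟨A ⊞ Y', biprod.desc f q, ?_, ⟨?_⟩⟩
  · apply biprod.hom_ext' <;> simp only [biprod.inl_desc_assoc, biprod.inr_desc_assoc, comp_zero]
    · rw [reassoc_of% wf, zero_comp]
    · rw [sq.w_assoc, wg, comp_zero]
  · have : Epi (d ≫ p) := epi_comp d p
    apply CokernelCofork.IsColimit.ofπ'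
    intro T t ht
    have ht1 : f ≫ t = 0 := by
      have := biprod.inl ≫= ht
      simpa using this
    have ht2 : q ≫ t = 0 := by
      have := biprod.inr ≫= ht
      simpa using this
    obtain ⟨u, hu⟩ := CokernelCofork.IsColimit.desc' hf t ht1
    simp only [Cofork.π_ofπ] at hu
    have hgu : g ≫ u = 0 := by
      rw [← cancel_epi d'', comp_zero, ← sq.w_assoc, hu, ht2]
    obtain ⟨v, hv⟩ := CokernelCofork.IsColimit.desc' hg u hgu
    simp only [Cofork.π_ofπ] at hv
    exact ⟨v, by simp only [Category.assoc]; rw [hv, hu]⟩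

/-- IsCokernelOfSome transports along precomposition with an isomorphism. -/
lemma isCokernelOfSome_of_iso {B B' X : 𝒞} (φ : B' ⟶ B) [IsIso φ] {d : B ⟶ X}
    (h : IsCokernelOfSome d) : IsCokernelOfSome (φ ≫ d) := by
  obtain ⟨A, f, w, ⟨hc⟩⟩ := h
  have hdepi : Epi d := epi_of_isColimit_cofork hc
  refine ⟨A, f ≫ inv φ, by simp [w], ⟨?_⟩⟩
  have : Epi (φ ≫ d) := epi_comp φ d
  apply CokernelCofork.IsColimit.ofπ'
  intro T t ht
  have ht' : f ≫ (inv φ ≫ t) = 0 := by simpa using ht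
  obtain ⟨u, hu⟩ := CokernelCofork.IsColimit.desc' hc (inv φ ≫ t) ht'
  simp only [Cofork.π_ofπ] at hu
  exact ⟨u, by rw [Category.assoc, hu]; simp⟩

/-- Any pullback of a semi-stable cokernel is a semi-stable cokernel. -/
lemma isSemiStableCokernel_of_isPullback {B X B' C' : 𝒞} {d : B ⟶ X}
    (hd : IsSemiStableCokernel d) {h : C' ⟶ X} {g : B' ⟶ B} {d' : B' ⟶ C'}
    (sq : IsPullback g d' d h) : IsSemiStableCokernel d' := by
  constructor
  · -- compare with the chosen pullback
    obtain ⟨B₀, g₀, d₀, sq₀, hc₀⟩ := hd.2 C' h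
    -- unique iso of pullbacks
    let φ : B' ⟶ B₀ := sq₀.lift g d' sq.w
    have hφd : φ ≫ d₀ = d' := sq₀.lift_snd _ _ _
    have : IsIso φ := by
      let ψ : B₀ ⟶ B' := sq.lift g₀ d₀ sq₀.w
      refine ⟨ψ, ?_, ?_⟩
      · apply sq.hom_ext <;> simp [φ, ψ, sq.lift_fst, sq.lift_snd, sq₀.lift_fst, sq₀.lift_snd]
      · apply sq₀.hom_ext <;> simp [φ, ψ, sq.lift_fst, sq.lift_snd, sq₀.lift_fst, sq₀.lift_snd]
    rw [← hφd]
    exact isCokernelOfSome_of_iso φ hc₀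
  · intro C'' k
    obtain ⟨P, g'', d'', sq'', hc''⟩ := hd.2 C'' (k ≫ h)
    let u : P ⟶ B' := sq.lift g'' (d'' ≫ k) (by rw [Category.assoc, sq''.w])
    have hu1 : u ≫ g = g'' := sq.lift_fst _ _ _
    have hu2 : u ≫ d' = d'' ≫ k := sq.lift_snd _ _ _
    refine ⟨P, u, d'', ?_, hc''⟩
    exact IsPullback.of_right (by rwa [hu1]) hu2 sq

theorem stmt6 {B X D : 𝒞} (d : B ⟶ X) (p : X ⟶ D)
    (hd : IsSemiStableCokernel d) (hp : IsSemiStableCokernel p) :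
    IsSemiStableCokernel (d ≫ p) := by
  constructor
  · exact comp_isCokernelOfSome d p hd hp.1
  · intro C' h
    obtain ⟨X', g₁, p', sqp, _⟩ := hp.2 C' h
    obtain ⟨B', g₂, d', sqd, _⟩ := hd.2 X' g₁
    refine ⟨B', g₂, d' ≫ p', sqd.paste_vert sqp, ?_⟩
    exact comp_isCokernelOfSome d' p'
      (isSemiStableCokernel_of_isPullback hd sqd)
      (isSemiStableCokernel_of_isPullback hp sqp).1
end

section
/- In the setting of two composable semi-stable cokernels d : B → C and p : C → D, with i = ker(d), h = ker(p), and pullback B' of d along h with projection g : B' → B, the composite p ∘ d is the cokernel of g. -/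
open CategoryTheory CategoryTheory.Limits ZeroObject

universe v u

variable {𝒞 : Type u} [Category.{v} 𝒞] [Preadditive 𝒞] [HasZeroObject 𝒞] [HasBinaryBiproducts 𝒞]

theorem stmt7 {A B X C' D B' : 𝒞} (d : B ⟶ X) (p : X ⟶ D)
    (hd : IsSemiStableCokernel d) (hp : IsSemiStableCokernel p)
    (i : A ⟶ B) (wi : i ≫ d = 0) (hker_i : IsLimit (KernelFork.ofι i wi))
    (h : C' ⟶ X) (wh : h ≫ p = 0) (hker_h : IsLimit (KernelFork.ofι h wh))
    (g : B' ⟶ B) (d' : B' ⟶ C') (hPB : IsPullback g d' d h)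
    (hcok_d' : IsCokernelOfSome d')
    (wg : g ≫ (d ≫ p) = 0) :
    Nonempty (IsColimit (CokernelCofork.ofπ (d ≫ p) wg)) := by
  obtain ⟨A₀, f, wf, ⟨hf⟩⟩ := hd.1
  obtain ⟨C₀, q, wq, ⟨hq⟩⟩ := hp.1
  obtain ⟨B₀, e, we, ⟨he⟩⟩ := hcok_d'
  have epi_d' : Epi d' := ⟨fun u v huv => Cofork.IsColimit.hom_ext he huv⟩
  have epi_d : Epi d := ⟨fun u v huv => Cofork.IsColimit.hom_ext hf huv⟩
  have epi_p : Epi p := ⟨fun u v huv => Cofork.IsColimit.hom_ext hq huv⟩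
  -- f factors through i
  have hfi : (hker_i.lift (KernelFork.ofι f wf)) ≫ i = f :=
    hker_i.fac (KernelFork.ofι f wf) WalkingParallelPair.zero
  have hqh : (hker_h.lift (KernelFork.ofι q wq)) ≫ h = q :=
    hker_h.fac (KernelFork.ofι q wq) WalkingParallelPair.zero
  -- d is a cokernel of i
  have hdcoker : ∀ {T : 𝒞} (v : B ⟶ T), i ≫ v = 0 → ∃ w : X ⟶ T, d ≫ w = v := by
    intro T v hv
    have : f ≫ v = 0 := by rw [← hfi, Category.assoc, hv, comp_zero]
    exact ⟨hf.desc (CokernelCofork.ofπ v this),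
      hf.fac (CokernelCofork.ofπ v this) WalkingParallelPair.one⟩
  have hpcoker : ∀ {T : 𝒞} (w : X ⟶ T), h ≫ w = 0 → ∃ u : D ⟶ T, p ≫ u = w := by
    intro T w hw
    have : q ≫ w = 0 := by rw [← hqh, Category.assoc, hw, comp_zero]
    exact ⟨hq.desc (CokernelCofork.ofπ w this),
      hq.fac (CokernelCofork.ofπ w this) WalkingParallelPair.one⟩
  -- i lifts to the pullback
  have wil : i ≫ d = 0 ≫ h := by rw [wi, zero_comp]
  have hlift : hPB.lift i 0 wil ≫ g = i := hPB.lift_fst i 0 wil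
  have epi_dp : Epi (d ≫ p) := epi_comp d p
  have key : ∀ {T : 𝒞} (v : B ⟶ T), g ≫ v = 0 → ∃ u : D ⟶ T, (d ≫ p) ≫ u = v := by
    intro T v hv
    have hiv : i ≫ v = 0 := by
      rw [← hlift, Category.assoc, hv, comp_zero]
    obtain ⟨w, hw⟩ := hdcoker v hiv
    have hhw : h ≫ w = 0 := by
      have : d' ≫ h ≫ w = 0 := by
        rw [← Category.assoc, ← hPB.w, Category.assoc, hw, hv]
      rwa [← cancel_epi d', comp_zero]
    obtain ⟨u, hu⟩ := hpcoker w hhw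
    exact ⟨u, by rw [Category.assoc, hu, hw]⟩
  constructor
  refine CokernelCofork.IsColimit.ofπ _ _ (fun {T} v hv => (key v hv).choose)
    (fun {T} v hv => (key v hv).choose_spec) (fun {T} v hv m hm => ?_)
  rw [← cancel_epi (d ≫ p), hm, (key v hv).choose_spec]
end

section
/- In a weakly idempotent complete additive category, if d : B → C and p : C → D are morphisms such that p ∘ d is a semi-stable cokernel, then p is a semi-stable cokernel. -/
open CategoryTheory CategoryTheory.Limits ZeroObject

universe v u

variable {𝒞 : Type u} [Category.{v} 𝒞] [Preadditive 𝒞] [HasZeroObject 𝒞] [HasBinaryBiproducts 𝒞]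

private lemma epi_of_cofork {A B X : 𝒞} {f : A ⟶ B} {d : B ⟶ X} {w : f ≫ d = 0}
    (hc : IsColimit (CokernelCofork.ofπ d w)) : Epi d :=
  ⟨fun u v huv => Cofork.IsColimit.hom_ext hc (by simpa using huv)⟩

private lemma mono_of_fork {A B X : 𝒞} {f : B ⟶ X} {k : A ⟶ B} {w : k ≫ f = 0}
    (hl : IsLimit (KernelFork.ofι k w)) : Mono k :=
  ⟨fun u v huv => Fork.IsLimit.hom_ext hl (by simpa using huv)⟩

/-- Core lemma: if `e = δ ≫ p'` is a cokernel of some morphism, and the pullback of `e`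
along `p'` exists and is a cokernel of some morphism, then (in a weakly idempotent
complete category) `p'` is a cokernel of some morphism. -/
private lemma core_cokernel
    (wic : ∀ ⦃X Y : 𝒞⦄ (r : X ⟶ Y) (s : Y ⟶ X), s ≫ r = 𝟙 Y →
      ∃ (K : 𝒞) (k : K ⟶ X) (w : k ≫ r = 0), Nonempty (IsLimit (KernelFork.ofι k w)))
    {Q K' C' : 𝒞} (δ : Q ⟶ K') (p' : K' ⟶ C')
    (hE : IsCokernelOfSome (δ ≫ p'))
    {R : 𝒞} {b : R ⟶ Q} {et : R ⟶ K'} (pb : IsPullback b et (δ ≫ p') p')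
    (hD : IsCokernelOfSome et) :
    IsCokernelOfSome p' := by
  obtain ⟨A₁, f₁, w₁, ⟨colim₁⟩⟩ := hE
  obtain ⟨A₄, f₄, w₄, ⟨colim₄⟩⟩ := hD
  have epiE : Epi (δ ≫ p') := epi_of_cofork colim₁
  have epiP : Epi p' := epi_of_epi δ p'
  have epiEt : Epi et := epi_of_cofork colim₄
  -- section of b
  set s : Q ⟶ R := pb.lift (𝟙 Q) δ (by simp) with hsdef
  have hsb : s ≫ b = 𝟙 Q := pb.lift_fst _ _ _
  have hset : s ≫ et = δ := pb.lift_snd _ _ _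
  obtain ⟨K₀, k₀, wk₀, ⟨klim⟩⟩ := wic b s hsb
  obtain ⟨ρ, hρ⟩ := KernelFork.IsLimit.lift' klim (𝟙 R - b ≫ s)
    (by simp [Preadditive.sub_comp, hsb])
  simp only [Fork.ι_ofι] at hρ
  have wφ : (k₀ ≫ et) ≫ p' = 0 := by
    rw [Category.assoc, ← pb.w, ← Category.assoc, wk₀, zero_comp]
  refine ⟨K₀, k₀ ≫ et, wφ, ⟨CokernelCofork.IsColimit.ofπ' p' wφ (fun {T} t ht => ?_)⟩⟩
  -- t : K' ⟶ T with (k₀ ≫ et) ≫ t = 0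
  have hl₀cond : (0 : A₁ ⟶ Q) ≫ (δ ≫ p') = (f₁ ≫ δ) ≫ p' := by
    rw [zero_comp, Category.assoc]; exact w₁.symm
  set l₀ : A₁ ⟶ R := pb.lift 0 (f₁ ≫ δ) hl₀cond with hl₀def
  have hl₀b : l₀ ≫ b = 0 := pb.lift_fst _ _ _
  have hl₀et : l₀ ≫ et = f₁ ≫ δ := pb.lift_snd _ _ _
  obtain ⟨c₀, hc₀⟩ := KernelFork.IsLimit.lift' klim l₀ hl₀b
  simp only [Fork.ι_ofι] at hc₀
  have key0 : f₁ ≫ (δ ≫ t) = 0 := by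
    have e1 : f₁ ≫ δ = c₀ ≫ (k₀ ≫ et) := by rw [← hl₀et, ← hc₀, Category.assoc]
    rw [← Category.assoc, e1, Category.assoc, ht, comp_zero]
  obtain ⟨v, hv⟩ := CokernelCofork.IsColimit.desc' colim₁ (δ ≫ t) key0
  simp only [Cofork.π_ofπ] at hv
  refine ⟨v, ?_⟩
  -- p' ≫ v = t via cancelling the epi et
  rw [← cancel_epi et]
  have h1 : et ≫ p' ≫ v = b ≫ δ ≫ t := by
    rw [← Category.assoc, ← pb.w, Category.assoc, hv]
  have h2 : et ≫ t = b ≫ δ ≫ t := by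
    have e2 : (b ≫ s) + ρ ≫ k₀ = 𝟙 R := by rw [hρ]; abel
    have e3 := congrArg (fun m => m ≫ (et ≫ t)) e2
    simp only [Preadditive.add_comp, Category.assoc, Category.id_comp] at e3
    rw [← e3]
    have ht' : k₀ ≫ et ≫ t = 0 := by rw [← Category.assoc]; exact ht
    rw [ht', comp_zero, add_zero, ← Category.assoc s et, hset]
  rw [h1, h2]

theorem stmt12
    (wic : ∀ ⦃X Y : 𝒞⦄ (r : X ⟶ Y) (s : Y ⟶ X), s ≫ r = 𝟙 Y →
      ∃ (K : 𝒞) (k : K ⟶ X) (w : k ≫ r = 0), Nonempty (IsLimit (KernelFork.ofι k w)))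
    {B X D : 𝒞} (d : B ⟶ X) (p : X ⟶ D)
    (h : IsSemiStableCokernel (d ≫ p)) :
    IsSemiStableCokernel p := by
  obtain ⟨hEcok, hsemi⟩ := h
  -- Key: for every `hh : C0 ⟶ D`, the pullback of `p` along `hh` exists and the
  -- pulled-back morphism is a cokernel of some morphism.
  have key : ∀ (C0 : 𝒞) (hh : C0 ⟶ D), ∃ (B' : 𝒞) (g' : B' ⟶ X) (p' : B' ⟶ C0),
      IsPullback g' p' p hh ∧ IsCokernelOfSome p' := by
    intro C0 hh
    -- Pull back `d ≫ p` along `biprod.desc p (-hh)`.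
    set μ : X ⊞ C0 ⟶ D := biprod.desc p (-hh) with hμdef
    have hμ2 : μ = biprod.fst ≫ p - biprod.snd ≫ hh := by
      apply biprod.hom_ext' <;> simp [hμdef]
    obtain ⟨S, π, n, pbS, hcok₂⟩ := hsemi (X ⊞ C0) μ
    have hσc : (𝟙 B) ≫ (d ≫ p) = (d ≫ biprod.inl) ≫ μ := by
      simp [hμdef]
    set σ : B ⟶ S := pbS.lift (𝟙 B) (d ≫ biprod.inl) hσc with hσdef
    have hσπ : σ ≫ π = 𝟙 B := pbS.lift_fst _ _ _
    have hσn : σ ≫ n = d ≫ biprod.inl := pbS.lift_snd _ _ _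
    obtain ⟨K', k', wk', ⟨klim⟩⟩ := wic π σ hσπ
    have monok' : Mono k' := mono_of_fork klim
    set g' : K' ⟶ X := k' ≫ n ≫ biprod.fst with hg'
    set p' : K' ⟶ C0 := k' ≫ n ≫ biprod.snd with hp'
    have h0 : k' ≫ n ≫ μ = 0 := by
      rw [← pbS.w, ← Category.assoc, wk', zero_comp]
    have comm : g' ≫ p = p' ≫ hh := by
      rw [hμ2] at h0
      simp only [Preadditive.comp_sub, Preadditive.sub_comp, Category.assoc,
        sub_eq_zero] at h0
      rw [hg', hp']
      simp only [Category.assoc]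
      exact h0
    -- universal property of the square (g', p')
    have mkcond : ∀ (W : 𝒞) (t₁ : W ⟶ X) (t₂ : W ⟶ C0), t₁ ≫ p = t₂ ≫ hh →
        ∃! m : W ⟶ K', m ≫ g' = t₁ ∧ m ≫ p' = t₂ := by
      intro W t₁ t₂ hw
      have vc : (0 : W ⟶ B) ≫ (d ≫ p) = (biprod.lift t₁ t₂) ≫ μ := by
        rw [hμ2, zero_comp, Preadditive.comp_sub, ← Category.assoc, ← Category.assoc,
          biprod.lift_fst, biprod.lift_snd, hw, sub_self]
      set vs : W ⟶ S := pbS.lift 0 (biprod.lift t₁ t₂) vc with hvs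
      have hvsπ : vs ≫ π = 0 := pbS.lift_fst _ _ _
      have hvsn : vs ≫ n = biprod.lift t₁ t₂ := pbS.lift_snd _ _ _
      obtain ⟨m, hm⟩ := KernelFork.IsLimit.lift' klim vs hvsπ
      simp only [Fork.ι_ofι] at hm
      refine ⟨m, ⟨?_, ?_⟩, ?_⟩
      · rw [hg', ← Category.assoc, hm, ← Category.assoc, hvsn, biprod.lift_fst]
      · rw [hp', ← Category.assoc, hm, ← Category.assoc, hvsn, biprod.lift_snd]
      · rintro m' ⟨hm'1, hm'2⟩
        rw [← cancel_mono k', hm]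
        apply pbS.hom_ext
        · rw [Category.assoc, wk', comp_zero, hvsπ]
        · rw [Category.assoc, hvsn]
          apply biprod.hom_ext
          · rw [Category.assoc, Category.assoc, biprod.lift_fst, ← hm'1, hg']
          · rw [Category.assoc, Category.assoc, biprod.lift_snd, ← hm'2, hp']
    have pb' : IsPullback g' p' p hh := by
      refine IsPullback.of_isLimit (PullbackCone.IsLimit.mk comm
        (fun sc => (mkcond sc.pt sc.fst sc.snd sc.condition).choose)
        (fun sc => (mkcond sc.pt sc.fst sc.snd sc.condition).choose_spec.1.1)
        (fun sc => (mkcond sc.pt sc.fst sc.snd sc.condition).choose_spec.1.2)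
        (fun sc m hm1 hm2 =>
          (mkcond sc.pt sc.fst sc.snd sc.condition).choose_spec.2 m ⟨hm1, hm2⟩))
    -- now show that p' is a cokernel of some morphism
    obtain ⟨Qq, a, e'', pbQ, hcokQ⟩ := hsemi C0 hh
    have hδcond : (a ≫ d) ≫ p = e'' ≫ hh := by rw [Category.assoc]; exact pbQ.w
    set δ : Qq ⟶ K' := pb'.lift (a ≫ d) e'' hδcond with hδdef
    have hδ1 : δ ≫ g' = a ≫ d := pb'.lift_fst _ _ _
    have hδ2 : δ ≫ p' = e'' := pb'.lift_snd _ _ _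
    obtain ⟨Rr, b, et, pbR, hcokR⟩ := hsemi K' (p' ≫ hh)
    have hccond : b ≫ (d ≫ p) = (et ≫ p') ≫ hh := by
      rw [Category.assoc]; exact pbR.w
    set c : Rr ⟶ Qq := pbQ.lift b (et ≫ p') hccond with hcdef
    have hc1 : c ≫ a = b := pbQ.lift_fst _ _ _
    have hc2 : c ≫ e'' = et ≫ p' := pbQ.lift_snd _ _ _
    have pbRight : IsPullback c et e'' p' := by
      refine IsPullback.of_right ?_ hc2 pbQ
      rw [hc1]
      exact pbR
    have pbCore : IsPullback c et (δ ≫ p') p' := by rw [hδ2]; exact pbRight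
    have hEcore : IsCokernelOfSome (δ ≫ p') := by rw [hδ2]; exact hcokQ
    exact ⟨K', g', p', pb', core_cokernel wic δ p' hEcore pbCore hcokR⟩
  constructor
  · -- p itself is a cokernel of some morphism: use the pullback along the identity
    obtain ⟨K', g', p', pb', A, f, wf, ⟨colim⟩⟩ := key D (𝟙 D)
    have hj : (𝟙 X) ≫ p = p ≫ 𝟙 D := by simp
    set j : X ⟶ K' := pb'.lift (𝟙 X) p hj with hjdef
    have hj1 : j ≫ g' = 𝟙 X := pb'.lift_fst _ _ _
    have hj2 : j ≫ p' = p := pb'.lift_snd _ _ _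
    have hgp : g' ≫ p = p' := by have := pb'.w; simpa using this
    have epi_p' : Epi p' := epi_of_cofork colim
    have epi_p : Epi p := by
      have : Epi (g' ≫ p) := by rw [hgp]; exact epi_p'
      exact epi_of_epi g' p
    have wf' : (f ≫ g') ≫ p = 0 := by
      rw [Category.assoc, hgp, wf]
    refine ⟨A, f ≫ g', wf', ⟨CokernelCofork.IsColimit.ofπ' p wf' (fun {T} t ht => ?_)⟩⟩
    have ht' : f ≫ (g' ≫ t) = 0 := by rw [← Category.assoc]; exact ht
    obtain ⟨v, hv⟩ := CokernelCofork.IsColimit.desc' colim (g' ≫ t) ht'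
    simp only [Cofork.π_ofπ] at hv
    refine ⟨v, ?_⟩
    rw [← hj2, Category.assoc, hv, ← Category.assoc, hj1, Category.id_comp]
  · intro C0 hh
    exact key C0 hh
end

section
/- In a weakly idempotent complete additive category, if p ∘ d is a semi-stable cokernel then p has a kernel. -/
open CategoryTheory CategoryTheory.Limits ZeroObject

universe v u

variable {𝒞 : Type u} [Category.{v} 𝒞] [Preadditive 𝒞] [HasZeroObject 𝒞] [HasBinaryBiproducts 𝒞]

theorem stmt13
    (wic : ∀ ⦃X Y : 𝒞⦄ (r : X ⟶ Y) (s : Y ⟶ X), s ≫ r = 𝟙 Y →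
      ∃ (K : 𝒞) (k : K ⟶ X) (w : k ≫ r = 0), Nonempty (IsLimit (KernelFork.ofι k w)))
    {B X D : 𝒞} (d : B ⟶ X) (p : X ⟶ D)
    (h : IsSemiStableCokernel (d ≫ p)) :
    ∃ (C' : 𝒞) (k : C' ⟶ X) (w : k ≫ p = 0), Nonempty (IsLimit (KernelFork.ofι k w)) := by

  obtain ⟨B', g, d', pb, -⟩ := h.2 X p
  have hs : (𝟙 B) ≫ (d ≫ p) = d ≫ p := by simp
  let s : B ⟶ B' := pb.lift (𝟙 B) d hs
  have hsg : s ≫ g = 𝟙 B := pb.lift_fst _ _ _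
  have hsd' : s ≫ d' = d := pb.lift_snd _ _ _
  obtain ⟨K, k, wk, ⟨hK⟩⟩ := wic g s hsg
  have wmain : (k ≫ d') ≫ p = 0 := by
    rw [Category.assoc, ← pb.w, ← Category.assoc, wk, zero_comp]
  refine ⟨K, k ≫ d', wmain, ⟨KernelFork.IsLimit.ofι _ _ ?_ ?_ ?_⟩⟩
  · intro T x hx
    have hx' : (0 : T ⟶ B) ≫ (d ≫ p) = x ≫ p := by simp [hx]
    exact hK.lift (KernelFork.ofι (pb.lift 0 x hx') (pb.lift_fst _ _ _))
  · intro T x hx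
    have hx' : (0 : T ⟶ B) ≫ (d ≫ p) = x ≫ p := by simp [hx]
    have h1 : hK.lift (KernelFork.ofι (pb.lift 0 x hx') (pb.lift_fst _ _ _)) ≫ k
        = pb.lift 0 x hx' := hK.fac _ WalkingParallelPair.zero
    rw [← Category.assoc, h1, pb.lift_snd]
  · intro T x hx m hm
    have hx' : (0 : T ⟶ B) ≫ (d ≫ p) = x ≫ p := by simp [hx]
    have hmono : Mono k := mono_of_isLimit_fork hK
    have h1 : hK.lift (KernelFork.ofι (pb.lift 0 x hx') (pb.lift_fst _ _ _)) ≫ k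
        = pb.lift 0 x hx' := hK.fac _ WalkingParallelPair.zero
    have h2 : (m ≫ k) = pb.lift 0 x hx' := by
      apply pb.hom_ext
      · rw [Category.assoc, wk, comp_zero, pb.lift_fst]
      · rw [Category.assoc, pb.lift_snd]; exact hm
    rw [← cancel_mono k, h1, h2]
end

section
/- In a weakly idempotent complete additive category, the exact structure given by the stable exact sequences is maximal: every conflation of any exact structure on the category is a stable exact sequence. -/
open CategoryTheory CategoryTheory.Limits ZeroObject

universe v u

variable {𝒞 : Type u} [Category.{v} 𝒞] [Preadditive 𝒞] [HasZeroObject 𝒞] [HasBinaryBiproducts 𝒞]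

/-- A stable exact sequence: a kernel-cokernel pair with semi-stable kernel and
semi-stable cokernel. -/
def IsStableExact {A B X : 𝒞} (i : A ⟶ B) (d : B ⟶ X) : Prop :=
  (∃ w : i ≫ d = 0, Nonempty (IsLimit (KernelFork.ofι i w)) ∧
      Nonempty (IsColimit (CokernelCofork.ofπ d w))) ∧
    IsSemiStableKernel i ∧ IsSemiStableCokernel d

/-- An exact structure in the sense of Quillen--Keller: a class of kernel-cokernel
pairs (conflations) satisfying the axioms [E0], [E1], [E2], [E2op]. -/
structure IsExactStructure
    (E : ∀ ⦃A B X : 𝒞⦄, (A ⟶ B) → (B ⟶ X) → Prop) : Prop where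
  ker_coker : ∀ ⦃A B X : 𝒞⦄ (i : A ⟶ B) (d : B ⟶ X), E i d →
    ∃ w : i ≫ d = 0, Nonempty (IsLimit (KernelFork.ofι i w)) ∧
      Nonempty (IsColimit (CokernelCofork.ofπ d w))
  E0 : ∃ (A : 𝒞) (i : A ⟶ (0 : 𝒞)), E i (𝟙 (0 : 𝒞))
  E1 : ∀ ⦃A B X A' Y : 𝒞⦄ (i : A ⟶ B) (d : B ⟶ X) (i' : A' ⟶ X) (d' : X ⟶ Y),
    E i d → E i' d' → ∃ (A2 : 𝒞) (i2 : A2 ⟶ B), E i2 (d ≫ d')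
  E2 : ∀ ⦃A B X X' : 𝒞⦄ (i : A ⟶ B) (d : B ⟶ X), E i d → ∀ (h : X' ⟶ X),
    ∃ (B' : 𝒞) (g : B' ⟶ B) (d' : B' ⟶ X') (_ : IsPullback g d' d h)
      (A' : 𝒞) (i' : A' ⟶ B'), E i' d'
  E2op : ∀ ⦃A B X A' : 𝒞⦄ (i : A ⟶ B) (d : B ⟶ X), E i d → ∀ (h : A ⟶ A'),
    ∃ (P : 𝒞) (g : B ⟶ P) (i' : A' ⟶ P) (_ : IsPushout i h g i')
      (Y : 𝒞) (d' : P ⟶ Y), E i' d'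


theorem stmt17
    (wic : ∀ ⦃X Y : 𝒞⦄ (r : X ⟶ Y) (s : Y ⟶ X), s ≫ r = 𝟙 Y →
      ∃ (K : 𝒞) (k : K ⟶ X) (w : k ≫ r = 0), Nonempty (IsLimit (KernelFork.ofι k w)))
    (E : ∀ ⦃A B X : 𝒞⦄, (A ⟶ B) → (B ⟶ X) → Prop) (hE : IsExactStructure E)
    {A B X : 𝒞} (i : A ⟶ B) (d : B ⟶ X) (h : E i d) :
    IsStableExact i d := by
  obtain ⟨w, hk, hc⟩ := hE.ker_coker i d h
  refine ⟨⟨w, hk, hc⟩, ⟨⟨X, d, w, hk⟩, ?_⟩, ⟨⟨A, i, w, hc⟩, ?_⟩⟩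
  · intro A' f
    obtain ⟨P, g, i', hpo, Y, d', hE'⟩ := hE.E2op i d h f
    obtain ⟨w', hk', _⟩ := hE.ker_coker i' d' hE'
    exact ⟨P, g, i', hpo, Y, d', w', hk'⟩
  · intro C' f
    obtain ⟨B', g, d', hpb, A', i', hE'⟩ := hE.E2 i d h f
    obtain ⟨w', _, hc'⟩ := hE.ker_coker i' d' hE'
    exact ⟨B', g, d', hpb, A', i', w', hc'⟩
end
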